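/- (Master covariance lemma behind Proposition 1) Let v1 ≠ v2 and v3 ≠ v4 be nodes and p, p' SNPs. Then Cov(L(v1,v2,p), L(v3,v4,p')) = σ_f²·1[q(p) = q(p')] + σ_g²·|{v1,v2} ∩ {v3,v4}| + σ_h²·|{(v1,p),(v2,p)} ∩ {(v3,p'),(v4,p')}|, where 1[·] is the 0/1 indicator and |·| denotes cardinality of the finite intersection. -/

import Mathlib

/-!
`L v v' p` is the sum of the members of the independent family `Sum.elim F (Sum.elim G H)` indexed
by `latentIndices q v v' p ⊆ Q ⊕ (V ⊕ V × P)`. Covariance is bilinear and vanishes between distinct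
independent members, so the covariance of two such sums is the sum of the variances over the common
indices, and this intersection splits along the three summands of the index type.
-/

open MeasureTheory ProbabilityTheory

/-- Covariance of two real random variables: `Cov(X,Y) = E[(X - E X)(Y - E Y)]`. -/
noncomputable def cov {Ω : Type*} [MeasurableSpace Ω] (μ : Measure Ω) (X Y : Ω → ℝ) : ℝ :=
  ∫ ω, (X ω - ∫ x, X x ∂μ) * (Y ω - ∫ x, Y x ∂μ) ∂μ

/-- Pearson correlation: `Cor(X,Y) = Cov(X,Y) / (Var(X)^{1/2} Var(Y)^{1/2})`. -/
noncomputable def cor {Ω : Type*} [MeasurableSpace Ω] (μ : Measure Ω) (X Y : Ω → ℝ) : ℝ :=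
  cov μ X Y / (Real.sqrt (variance X μ) * Real.sqrt (variance Y μ))

open Finset

lemma cov_eq_covariance {Ω : Type*} [MeasurableSpace Ω] (μ : Measure Ω) (X Y : Ω → ℝ) :
    cov μ X Y = cov[X, Y; μ] := rfl

lemma Finset.disjSum_inter_disjSum {α β : Type*} [DecidableEq α] [DecidableEq β]
    (s₁ s₂ : Finset α) (t₁ t₂ : Finset β) :
    s₁.disjSum t₁ ∩ s₂.disjSum t₂ = (s₁ ∩ s₂).disjSum (t₁ ∩ t₂) := by
  ext (a | b) <;> simp

namespace ProbabilityTheory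

variable {Ω ι : Type*} [MeasurableSpace Ω] {μ : Measure Ω} {Z : ι → Ω → ℝ}

lemma iIndepFun.covariance_eq_ite [DecidableEq ι] (hZ : iIndepFun Z μ)
    (hmem : ∀ i, MemLp (Z i) 2 μ) (i j : ι) :
    cov[Z i, Z j; μ] = if i = j then Var[Z i; μ] else 0 := by
  split_ifs with hij
  · rw [hij, covariance_self (hmem j).aemeasurable]
  · exact (hZ.indepFun hij).covariance_eq_zero (hmem i) (hmem j)

lemma iIndepFun.covariance_sum_sum [IsFiniteMeasure μ] [DecidableEq ι] (hZ : iIndepFun Z μ)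
    (hmem : ∀ i, MemLp (Z i) 2 μ) (s t : Finset ι) :
    cov[∑ i ∈ s, Z i, ∑ j ∈ t, Z j; μ] = ∑ i ∈ s ∩ t, Var[Z i; μ] := by
  rw [covariance_sum_sum' (fun i _ ↦ hmem i) (fun j _ ↦ hmem j), ← sum_ite_mem]
  refine sum_congr rfl fun i _ ↦ ?_
  simp_rw [hZ.covariance_eq_ite hmem, sum_ite_eq]

end ProbabilityTheory

section LatentIndices

variable {Q V P : Type*} [DecidableEq V] [DecidableEq P]

def latentIndices (q : P → Q) (v v' : V) (p : P) : Finset (Q ⊕ (V ⊕ V × P)) :=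
  ({q p} : Finset Q).disjSum (({v, v'} : Finset V).disjSum {(v, p), (v', p)})

lemma sum_latentIndices {M : Type*} [AddCommMonoid M] (q : P → Q) (f : Q → M) (g : V → M)
    (h : V × P → M) {v v' : V} (hv : v ≠ v') (p : P) :
    ∑ i ∈ latentIndices q v v' p, Sum.elim f (Sum.elim g h) i
      = f (q p) + g v + g v' + h (v, p) + h (v', p) := by
  have hvp : (v, p) ≠ (v', p) := by simpa using hv
  simp only [latentIndices, sum_disjSum, sum_singleton, Sum.elim_inl, Sum.elim_inr,
    sum_pair hv, sum_pair hvp]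
  abel

end LatentIndices

/-- Master covariance lemma behind Proposition 1. -/
theorem nrss_cov_master
    {Ω Q V P : Type*} [MeasurableSpace Ω] [DecidableEq Q] [DecidableEq V] [DecidableEq P]
    (μ : Measure Ω) [IsProbabilityMeasure μ]
    (q : P → Q)
    (F : Q → Ω → ℝ) (G : V → Ω → ℝ) (H : V × P → Ω → ℝ)
    (σf2 σg2 σh2 : ℝ)
    (hIndep : iIndepFun
      (Sum.elim F (Sum.elim G H)) μ)
    (hFmem : ∀ i, MemLp (F i) 2 μ)
    (hGmem : ∀ i, MemLp (G i) 2 μ)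
    (hHmem : ∀ i, MemLp (H i) 2 μ)
    (hFvar : ∀ i, variance (F i) μ = σf2)
    (hGvar : ∀ i, variance (G i) μ = σg2)
    (hHvar : ∀ i, variance (H i) μ = σh2)
    (L : V → V → P → Ω → ℝ)
    (hL : ∀ v v' p ω, L v v' p ω = F (q p) ω + G v ω + G v' ω + H (v, p) ω + H (v', p) ω)
    (v1 v2 v3 v4 : V) (h12 : v1 ≠ v2) (h34 : v3 ≠ v4)
    (p p' : P) :
    cov μ (L v1 v2 p) (L v3 v4 p') =
      σf2 * (if q p = q p' then 1 else 0)
        + σg2 * (({v1, v2} ∩ {v3, v4} : Finset V).card : ℝ)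
        + σh2 * ((({(v1, p), (v2, p)} ∩ {(v3, p'), (v4, p')} : Finset (V × P))).card : ℝ) := by
  have hmem : ∀ i, MemLp (Sum.elim F (Sum.elim G H) i) 2 μ := by
    rintro (i | i | i) <;> [exact hFmem i; exact hGmem i; exact hHmem i]
  have hL_sum : ∀ {v v'} (p), v ≠ v' →
      L v v' p = ∑ i ∈ latentIndices q v v' p, Sum.elim F (Sum.elim G H) i := by
    intro v v' p hv
    ext ω
    rw [hL, sum_latentIndices q F G H hv p]
    simp
  have hvar : ∀ i, Var[Sum.elim F (Sum.elim G H) i; μ]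
      = Sum.elim (fun _ ↦ σf2) (Sum.elim (fun _ ↦ σg2) (fun _ ↦ σh2)) i := by
    rintro (i | i | i) <;> [exact hFvar i; exact hGvar i; exact hHvar i]
  rw [cov_eq_covariance, hL_sum p h12, hL_sum p' h34, hIndep.covariance_sum_sum hmem]
  simp only [latentIndices, disjSum_inter_disjSum, hvar, sum_disjSum, sum_const, nsmul_eq_mul,
    Sum.elim_inl, Sum.elim_inr]
  have hQ : (#({q p} ∩ {q p'}) : ℝ) = if q p = q p' then 1 else 0 := by
    rw [singleton_inter]
    split_ifs <;> simp_all
  rw [hQ]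
  ring
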